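/- arXiv:2601.10162 — 2 statements merged into one kernel-verified Lean document; each statement's English description precedes it below -/
import Mathlib

section
/- For every quaternion ζ ∈ ℍ, (1/√π) ∫_ℝ exp(ζt − t²) dt = exp(ζ²/4), where exp denotes the quaternionic exponential and the integrand makes sense since ζt and −t² commute. -/
/-!
Every quaternion `ζ` lies in a copy of `ℂ` inside `ℍ`: the image of an `ℝ`-algebra embedding
`φ : ℂ → ℍ` sending `i` to a unit imaginary quaternion parallel to `ζ.im`. Such a `φ` is
continuous, so it commutes with `exp` and with the Bochner integral, and the identity becomes
the image under `φ` of the complex Gaussian integral `∫ exp (z t - t²) dt = √π exp (z² / 4)`.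
-/

open Quaternion Real

theorem Complex.integral_exp_mul_sub_sq (z : ℂ) :
    ∫ t : ℝ, Complex.exp (z * t - t ^ 2) = √π * Complex.exp (z ^ 2 / 4) := by
  have h := integral_cexp_quadratic (b := -1) (by norm_num) z 0
  rw [sqrt_eq_rpow, Complex.ofReal_cpow pi_pos.le]
  convert h using 2
  · ext t; ring_nf
  · norm_num
  · ring_nf

theorem Complex.integrable_exp_mul_sub_sq (z : ℂ) :
    MeasureTheory.Integrable fun t : ℝ ↦ Complex.exp (z * t - t ^ 2) := by
  convert integrable_cexp_quadratic (b := 1) (by norm_num) z 0 using 3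
  ring

theorem AlgHom.integral_exp_smul_sub_sq {A : Type*} [NormedRing A] [NormedAlgebra ℝ A]
    [CompleteSpace A] [Algebra ℚ A] (φ : ℂ →ₐ[ℝ] A) (z : ℂ) :
    ∫ t : ℝ, NormedSpace.exp (t • φ z - algebraMap ℝ A (t ^ 2))
      = √π • NormedSpace.exp (φ (z ^ 2 / 4)) := by
  let Φ : ℂ →L[ℝ] A := LinearMap.toContinuousLinearMap φ.toLinearMap
  have hexp (w : ℂ) : NormedSpace.exp (φ w) = Φ (Complex.exp w) := by
    rw [Complex.exp_eq_exp_ℂ, ← NormedSpace.map_exp φ Φ.continuous]; rfl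
  have harg (t : ℝ) : t • φ z - algebraMap ℝ A (t ^ 2) = φ (z * t - t ^ 2) := by
    rw [show z * t - t ^ 2 = t • z - algebraMap ℝ ℂ (t ^ 2) by simp [Complex.real_smul, mul_comm],
      map_sub, map_smul, AlgHom.commutes]
  simp_rw [harg, hexp, Φ.integral_comp_comm (Complex.integrable_exp_mul_sub_sq z),
    Complex.integral_exp_mul_sub_sq, ← Complex.real_smul, map_smul]

theorem Quaternion.exists_mul_self_eq_neg_one_smul_eq_im (q : ℍ[ℝ]) :
    ∃ u : ℍ[ℝ], u * u = -1 ∧ ‖q.im‖ • u = q.im := by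
  rcases eq_or_ne q.im 0 with h | h
  · have hi : (⟨0, 1, 0, 0⟩ : ℍ[ℝ]) * ⟨0, 1, 0, 0⟩ = -1 := by ext <;> simp
    exact ⟨_, hi, by rw [h, norm_zero]; exact zero_smul _ _⟩
  · have hn : ‖q.im‖ ≠ 0 := norm_ne_zero_iff.mpr h
    refine ⟨‖q.im‖⁻¹ • q.im, ?_, smul_inv_smul₀ hn _⟩
    rw [smul_mul_smul_comm, ← sq, ← sq, im_sq, normSq_eq_norm_mul_self, smul_neg,
      ← coe_mul_eq_smul, ← coe_mul, ← sq, ← mul_pow, inv_mul_cancel₀ hn, one_pow, coe_one]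

theorem Quaternion.exists_algHom_complex_apply_eq (q : ℍ[ℝ]) :
    ∃ (φ : ℂ →ₐ[ℝ] ℍ[ℝ]) (z : ℂ), φ z = q := by
  obtain ⟨u, hu, hqu⟩ := q.exists_mul_self_eq_neg_one_smul_eq_im
  refine ⟨Complex.liftAux u hu, ⟨q.re, ‖q.im‖⟩, ?_⟩
  rw [Complex.liftAux_apply, hqu, algebraMap_def]
  exact q.re_add_im

/-- Quaternionic Gaussian integral: `(1/√π) ∫_ℝ exp(ζ t − t²) dt = exp(ζ²/4)`. -/
theorem gaussian_integral_quaternion (ζ : ℍ[ℝ]) :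
    (Real.sqrt Real.pi)⁻¹ •
        (∫ t : ℝ, NormedSpace.exp (t • ζ - ((t ^ 2 : ℝ) : ℍ[ℝ])))
      = NormedSpace.exp (ζ ^ 2 / 4) := by
  obtain ⟨φ, z, rfl⟩ := ζ.exists_algHom_complex_apply_eq
  have h := φ.integral_exp_smul_sub_sq z
  rw [algebraMap_def] at h
  rw [h, inv_smul_smul₀ (sqrt_ne_zero'.mpr pi_pos), map_div₀, map_pow, map_ofNat]
end

section
/- Let α > 0 and let f : ℂ → ℂ be bounded measurable with ‖f‖_∞ = sup|f|. Then the Berezin transform B_α f(z) = (α/π)∫_ℂ e^{−α|z−w|²} f(w) dm(w) satisfies the Lipschitz estimate |B_α f(z) − B_α f(w)| ≤ 2√(α/π)·‖f‖_∞·|z − w| for all z, w ∈ ℂ. -/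
open MeasureTheory

noncomputable def berezin (α : ℝ) (f : ℂ → ℂ) (z : ℂ) : ℂ :=
  ((α / Real.pi : ℝ) : ℂ) *
    ∫ w : ℂ, ((Real.exp (-α * ‖z - w‖ ^ 2) : ℝ) : ℂ) * f w

/-!
The difference of the Berezin transforms at `z` and `w` is at most `(α/π) ‖f‖_∞` times the
`L¹` distance of the two Gaussian kernels. A rotation and a translation of `ℂ` move `z - w` onto
the positive real axis, where that distance factors as a one-dimensional `L¹` distance of two
shifted Gaussians times `∫ e^{-αt²} dt = √(π/α)`. On the line, a symmetric decreasing `g` is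
dominated by its translate `g (· - h)` exactly to the right of `h/2`, so
`∫ |g (s - h) - g s| ds = 2 ∫_{-h/2}^{h/2} g ≤ 2 h g 0`.
-/

open Real Set

section Line

variable {E : Type*} [NormedAddCommGroup E] [NormedSpace ℝ E]

theorem setIntegral_Iic_comp_sub_right (g : ℝ → E) (a h : ℝ) :
    ∫ s in Iic (a + h), g (s - h) = ∫ s in Iic a, g s := by
  rw [← preimage_sub_const_Iic,
    (measurePreserving_sub_right volume h).setIntegral_preimage_emb
      (measurableEmbedding_subRight h)]

theorem setIntegral_Ioi_comp_sub_right (g : ℝ → E) (a h : ℝ) :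
    ∫ s in Ioi (a + h), g (s - h) = ∫ s in Ioi a, g s := by
  rw [← preimage_sub_const_Ioi,
    (measurePreserving_sub_right volume h).setIntegral_preimage_emb
      (measurableEmbedding_subRight h)]

theorem abs_le_abs_sub_of_le_half {s h : ℝ} (hh : 0 ≤ h) (hs : s ≤ h / 2) : |s| ≤ |s - h| := by
  rw [← sq_le_sq]; nlinarith

theorem abs_sub_le_abs_of_half_le {s h : ℝ} (hh : 0 ≤ h) (hs : h / 2 ≤ s) : |s - h| ≤ |s| := by
  rw [← sq_le_sq]; nlinarith

variable {g : ℝ → ℝ} {h : ℝ}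

theorem setIntegral_Iic_abs_comp_sub_sub (hg : Integrable g)
    (hg_anti : ∀ x y, |x| ≤ |y| → g y ≤ g x) (hh : 0 ≤ h) :
    ∫ s in Iic (h / 2), |g (s - h) - g s| = ∫ s in Ioc (-(h / 2)) (h / 2), g s := by
  have hshift : ∫ s in Iic (h / 2), g (s - h) = ∫ s in Iic (-(h / 2)), g s := by
    rw [← setIntegral_Iic_comp_sub_right g (-(h / 2)) h]; ring_nf
  have hsplit : ∫ s in Iic (h / 2), g s
      = (∫ s in Iic (-(h / 2)), g s) + ∫ s in Ioc (-(h / 2)) (h / 2), g s := by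
    rw [← Iic_union_Ioc_eq_Iic (by linarith : -(h / 2) ≤ h / 2), setIntegral_union
      (Iic_disjoint_Ioc le_rfl) measurableSet_Ioc hg.integrableOn hg.integrableOn]
  calc ∫ s in Iic (h / 2), |g (s - h) - g s|
      = ∫ s in Iic (h / 2), (g s - g (s - h)) :=
        setIntegral_congr_fun measurableSet_Iic fun s hs => by
          rw [abs_sub_comm, abs_of_nonneg
            (sub_nonneg.2 (hg_anti _ _ (abs_le_abs_sub_of_le_half hh hs)))]
    _ = ∫ s in Ioc (-(h / 2)) (h / 2), g s := by
        rw [integral_sub hg.integrableOn (hg.comp_sub_right h).integrableOn, hshift, hsplit,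
          add_sub_cancel_left]

theorem setIntegral_Ioi_abs_comp_sub_sub (hg : Integrable g)
    (hg_anti : ∀ x y, |x| ≤ |y| → g y ≤ g x) (hh : 0 ≤ h) :
    ∫ s in Ioi (h / 2), |g (s - h) - g s| = ∫ s in Ioc (-(h / 2)) (h / 2), g s := by
  have hshift : ∫ s in Ioi (h / 2), g (s - h) = ∫ s in Ioi (-(h / 2)), g s := by
    rw [← setIntegral_Ioi_comp_sub_right g (-(h / 2)) h]; ring_nf
  have hsplit : ∫ s in Ioi (-(h / 2)), g s
      = (∫ s in Ioc (-(h / 2)) (h / 2), g s) + ∫ s in Ioi (h / 2), g s := by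
    rw [← Ioc_union_Ioi_eq_Ioi (by linarith : -(h / 2) ≤ h / 2), setIntegral_union
      (Ioc_disjoint_Ioi le_rfl) measurableSet_Ioi hg.integrableOn hg.integrableOn]
  calc ∫ s in Ioi (h / 2), |g (s - h) - g s|
      = ∫ s in Ioi (h / 2), (g (s - h) - g s) :=
        setIntegral_congr_fun measurableSet_Ioi fun s hs => abs_of_nonneg
          (sub_nonneg.2 (hg_anti _ _ (abs_sub_le_abs_of_half_le hh hs.le)))
    _ = ∫ s in Ioc (-(h / 2)) (h / 2), g s := by
        rw [integral_sub (hg.comp_sub_right h).integrableOn hg.integrableOn, hshift, hsplit,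
          add_sub_cancel_right]

theorem integral_abs_comp_sub_sub_le (hg : Integrable g)
    (hg_anti : ∀ x y, |x| ≤ |y| → g y ≤ g x) (hh : 0 ≤ h) :
    ∫ s, |g (s - h) - g s| ≤ 2 * h * g 0 := by
  have hmid : ∫ s in Ioc (-(h / 2)) (h / 2), g s ≤ h * g 0 := by
    calc ∫ s in Ioc (-(h / 2)) (h / 2), g s ≤ ∫ _ in Ioc (-(h / 2)) (h / 2), g 0 :=
          setIntegral_mono_on hg.integrableOn (integrableOn_const (by simp)) measurableSet_Ioc
            fun s _ => hg_anti 0 s (by simp)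
      _ = h * g 0 := by
          rw [setIntegral_const, volume_real_Ioc_of_le (by linarith), smul_eq_mul]; ring_nf
  rw [← integral_add_compl (f := fun s => |g (s - h) - g s|) measurableSet_Iic
    ((hg.comp_sub_right h).sub hg).abs, compl_Iic,
    setIntegral_Iic_abs_comp_sub_sub hg hg_anti hh, setIntegral_Ioi_abs_comp_sub_sub hg hg_anti hh]
  linarith

end Line

theorem exp_neg_mul_sq_le_of_abs_le {α : ℝ} (hα : 0 ≤ α) {x y : ℝ} (hxy : |x| ≤ |y|) :
    exp (-α * y ^ 2) ≤ exp (-α * x ^ 2) :=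
  exp_le_exp.2 (by nlinarith [mul_le_mul_of_nonneg_left (sq_le_sq.2 hxy) hα])

theorem integral_abs_exp_neg_mul_sq_sub_le {α : ℝ} (hα : 0 < α) {h : ℝ} (hh : 0 ≤ h) :
    ∫ s, |exp (-α * (s - h) ^ 2) - exp (-α * s ^ 2)| ≤ 2 * h := by
  simpa using integral_abs_comp_sub_sub_le (integrable_exp_neg_mul_sq hα)
    (fun _ _ => exp_neg_mul_sq_le_of_abs_le hα.le) hh

theorem integrable_exp_neg_mul_norm_sub_sq {α : ℝ} (hα : 0 < α) (z : ℂ) :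
    Integrable fun u : ℂ => exp (-α * ‖z - u‖ ^ 2) := by
  have hint : Integrable fun u : ℂ => exp (-α * ‖u‖ ^ 2) :=
    .of_integral_ne_zero <| by
      rw [GaussianFourier.integral_rexp_neg_mul_sq_norm hα]; positivity
  exact hint.comp_sub_left z

theorem integral_abs_exp_neg_mul_norm_sub_sq_sub (α h : ℝ) :
    ∫ u : ℂ, |exp (-α * ‖u - h‖ ^ 2) - exp (-α * ‖u‖ ^ 2)|
      = (∫ s : ℝ, |exp (-α * (s - h) ^ 2) - exp (-α * s ^ 2)|) * ∫ t : ℝ, exp (-α * t ^ 2) := by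
  rw [← (Complex.volume_preserving_equiv_real_prod.symm _).integral_comp
    (MeasurableEquiv.measurableEmbedding _), Measure.volume_eq_prod, ← integral_prod_mul]
  congr 1 with p
  simp only [Complex.measurableEquivRealProd_symm_apply, Complex.sq_norm, Complex.normSq_apply,
    Complex.sub_re, Complex.sub_im, Complex.ofReal_re, Complex.ofReal_im, sub_zero]
  rw [← abs_of_pos (exp_pos (-α * p.2 ^ 2)), ← abs_mul, sub_mul (exp _), ← exp_add, ← exp_add]
  ring_nf

theorem integral_comp_norm_sub_norm_sub {E : Type*} [NormedAddCommGroup E] [NormedSpace ℝ E]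
    (F : ℝ → ℝ → E) (z w : ℂ) :
    ∫ u : ℂ, F ‖z - u‖ ‖w - u‖ = ∫ x : ℂ, F ‖x - ‖z - w‖‖ ‖x‖ := by
  set c := Circle.exp (Complex.arg (z - w))
  have hc : (c : ℂ) * ‖z - w‖ = z - w := by
    rw [Circle.coe_exp, mul_comm, Complex.norm_mul_exp_arg_mul_I]
  rw [← integral_add_right_eq_self _ w, ← (rotation c).measurePreserving.integral_comp
    (rotation c).toHomeomorph.measurableEmbedding]
  congr 1 with x
  have hz : z - (c * x + w) = c * (‖z - w‖ - x) := by linear_combination -hc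
  simp [hz, norm_sub_rev, Circle.norm_coe]

theorem norm_berezin_sub_le {α : ℝ} (hα : 0 < α) {f : ℂ → ℂ} (hf : AEStronglyMeasurable f)
    {C : ℝ} (hbd : ∀ u, ‖f u‖ ≤ C) (z w : ℂ) :
    ‖berezin α f z - berezin α f w‖
      ≤ α / π * C * ∫ u : ℂ, |exp (-α * ‖z - u‖ ^ 2) - exp (-α * ‖w - u‖ ^ 2)| := by
  have hint (z : ℂ) : Integrable fun u : ℂ => ((exp (-α * ‖z - u‖ ^ 2) : ℝ) : ℂ) * f u :=
    (integrable_exp_neg_mul_norm_sub_sq hα z).ofReal.mul_bdd hf (ae_of_all _ hbd)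
  have hdiff : berezin α f z - berezin α f w = ((α / π : ℝ) : ℂ) *
      ∫ u : ℂ, ((exp (-α * ‖z - u‖ ^ 2) - exp (-α * ‖w - u‖ ^ 2) : ℝ) : ℂ) * f u := by
    rw [berezin, berezin, ← mul_sub, ← integral_sub (hint z) (hint w)]
    push_cast; simp only [sub_mul]
  rw [hdiff, norm_mul, Complex.norm_real, norm_of_nonneg (by positivity), mul_assoc,
    ← integral_const_mul]
  gcongr
  refine norm_integral_le_of_norm_le
    (((integrable_exp_neg_mul_norm_sub_sq hα z).sub
      (integrable_exp_neg_mul_norm_sub_sq hα w)).abs.const_mul C) (ae_of_all _ fun u => ?_)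
  rw [norm_mul, Complex.norm_real, norm_eq_abs, mul_comm]
  gcongr
  exact hbd u

/-- Lipschitz estimate for the Berezin transform:
`|B_α f(z) − B_α f(w)| ≤ 2√(α/π) ‖f‖_∞ |z − w|`. -/
theorem berezin_lipschitz (α : ℝ) (hα : 0 < α) (f : ℂ → ℂ)
    (hmeas : Measurable f) (C : ℝ) (hbd : ∀ z : ℂ, ‖f z‖ ≤ C)
    (z w : ℂ) :
    ‖berezin α f z - berezin α f w‖
      ≤ 2 * Real.sqrt (α / Real.pi) * C * ‖z - w‖ := by
  have hC : 0 ≤ C := (norm_nonneg _).trans (hbd 0)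
  have hsqrt : α / π * sqrt (π / α) = sqrt (α / π) := by
    rw [← inv_div α π, sqrt_inv, ← div_eq_mul_inv, div_sqrt]
  calc ‖berezin α f z - berezin α f w‖
      ≤ α / π * C * ∫ u : ℂ, |exp (-α * ‖z - u‖ ^ 2) - exp (-α * ‖w - u‖ ^ 2)| :=
        norm_berezin_sub_le hα hmeas.aestronglyMeasurable hbd z w
    _ = α / π * C * ((∫ s : ℝ, |exp (-α * (s - ‖z - w‖) ^ 2) - exp (-α * s ^ 2)|)
          * sqrt (π / α)) := by
        rw [integral_comp_norm_sub_norm_sub (fun a b => |exp (-α * a ^ 2) - exp (-α * b ^ 2)|),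
          integral_abs_exp_neg_mul_norm_sub_sq_sub, integral_gaussian]
    _ ≤ α / π * C * (2 * ‖z - w‖ * sqrt (π / α)) := by
        gcongr
        exact integral_abs_exp_neg_mul_sq_sub_le hα (norm_nonneg _)
    _ = 2 * sqrt (α / π) * C * ‖z - w‖ := by rw [← hsqrt]; ring
end
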